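/- arXiv:1412.7670 — 2 statements merged into one kernel-verified Lean document; each statement's English description precedes it below -/
import Mathlib

section
/- Let ε ∈ (0,1/2) and n ∈ ℕ. Then a shortest path between two vertices of the weighted diamond W_n contains, for each k ≥ 1, at most two edges of length (1/2+ε)^k, and at most one edge of length 1; moreover, if it contains two edges of the maximal edge-length occurring in the path, these two edges are adjacent (share an endpoint). -/
noncomputable section

open scoped ENNReal Classical

namespace Stmt

/-- Vertex set together with the (oriented) edge relation of the diamond graph `D n`. -/
def VE : ℕ → (V : Type) × (V → V → Prop)
  | 0 => ⟨Fin 2, fun u v => u = 0 ∧ v = 1⟩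
  | n + 1 =>
      ⟨(VE n).1 ⊕ ({e : (VE n).1 × (VE n).1 // (VE n).2 e.1 e.2} × Bool),
        fun u v =>
          ∃ (e : {e : (VE n).1 × (VE n).1 // (VE n).2 e.1 e.2}) (b : Bool),
            (u = Sum.inl e.1.1 ∧ v = Sum.inr (e, b)) ∨
            (u = Sum.inr (e, b) ∧ v = Sum.inl e.1.2)⟩

/-- Vertices of the diamond graph `D n` (equivalently, of the weighted diamond `W n`). -/
def Vert (n : ℕ) : Type := (VE n).1

/-- The (oriented) edge relation of the diamond graph `D n`. -/
def dEdge (n : ℕ) : Vert n → Vert n → Prop := (VE n).2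

/-- The edges of generation `k` inside the vertex set of `D n`: the edges of `D k`,
transported to `Vert n` via the canonical inclusions.  These are the edges of the
weighted diamond `W n`, which get weight `(1/2 + ε) ^ k`. -/
def edgeAt : (n : ℕ) → (k : ℕ) → Vert n → Vert n → Prop
  | 0, k => fun u v => k = 0 ∧ dEdge 0 u v
  | n + 1, k => fun u v =>
      (k = n + 1 ∧ dEdge (n + 1) u v) ∨
      (∃ u' v' : Vert n, u = Sum.inl u' ∧ v = Sum.inl v' ∧ edgeAt n k u' v')

/-- Edge weights of the weighted diamond `W n`:  the value is `(1/2 + ε) ^ k` if `{u, v}`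
is an edge of generation `k`, and `∞` if `{u, v}` is not an edge of `W n`. -/
def wCost (ε : ℝ) (n : ℕ) (u v : Vert n) : ℝ≥0∞ :=
  ⨅ (k : ℕ) (_ : edgeAt n k u v ∨ edgeAt n k v u), ENNReal.ofReal ((1 / 2 + ε) ^ k)

/-- Total weight of a walk, recorded as the list of visited vertices. -/
def walkCost {V : Type*} (c : V → V → ℝ≥0∞) : List V → ℝ≥0∞
  | [] => 0
  | [_] => 0
  | u :: v :: l => c u v + walkCost c (v :: l)

/-- The shortest-path (extended) distance associated to an edge-weight function `c`. -/
def spDist {V : Type*} (c : V → V → ℝ≥0∞) (u v : V) : ℝ≥0∞ :=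
  ⨅ p : { l : List V // l.head? = some u ∧ l.getLast? = some v }, walkCost c p.1

/-- The shortest-path metric `d_{W_n}` of the weighted diamond `W n` (with parameter `ε`). -/
def dW (ε : ℝ) (n : ℕ) (u v : Vert n) : ℝ :=
  (spDist (wCost ε n) u v).toReal

/-- `embedsM K dV dY` : there is a map of distortion at most `K` from the space with distance
function `dV` to the space with distance function `dY`. -/
def embedsM {V Y : Type*} (K : ℝ) (dV : V → V → ℝ) (dY : Y → Y → ℝ) : Prop :=
  ∃ f : V → Y, Function.Injective f ∧ ∃ r : ℝ, 0 < r ∧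
    ∀ a b, r * dV a b ≤ dY (f a) (f b) ∧ dY (f a) (f b) ≤ K * (r * dV a b)

/-!
Along a shortest path of `W n` the edge lengths first increase strictly and then decrease
strictly, so each length occurs at most twice and the largest one only at the peak. It suffices
to rule out a *valley*: three consecutive edges `ab, bc, cd` with `bc` no longer than its two
neighbours. This goes by induction on `n`. In `W (n+1)`, if `b` or `c` is one of the midpoints
created in the last subdivision, the path runs through both of its edges, of length
`(1/2+ε)^(n+1)`, and thus either backtracks or can be shortened along the subdivided edge, of
length `(1/2+ε)^n < 2 (1/2+ε)^(n+1)`. Otherwise `bc` is an edge of `W n`, of length at least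
`(1/2+ε)^n`, which forces `a` and `d` to be vertices of `D n` as well, and the valley lives in a
shortest path of `W n`. Finally, two consecutive edges of length `1` are both the unique edge of
`D 0`, i.e. a backtrack.
-/

section Valley
variable {α : Type*} [LinearOrder α]

def NoValley (f : ℕ → α) (N : ℕ) : Prop :=
  ∀ t, t + 2 < N → f t < f (t + 1) ∨ f (t + 2) < f (t + 1)

theorem NoValley.lt_or_lt {f : ℕ → α} {N : ℕ} (h : NoValley f N) {i l k : ℕ}
    (hil : i < l) (hlk : l < k) (hk : k < N) : f i < f l ∨ f k < f l := by
  obtain ⟨m, rfl⟩ : ∃ m, l = m + 1 := ⟨l - 1, by omega⟩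
  rcases h m (by omega) with hup | hdown
  · rcases (show i = m ∨ i < m by omega) with rfl | him
    · exact Or.inl hup
    · rcases h.lt_or_lt him (Nat.lt_succ_self m) (by omega) with h' | h'
      · exact Or.inl (h'.trans hup)
      · exact absurd hup (lt_asymm h')
  · rcases (show m + 2 = k ∨ m + 2 < k by omega) with rfl | hmk
    · exact Or.inr hdown
    · rcases h.lt_or_lt (Nat.lt_succ_self (m + 1)) hmk hk with h' | h'
      · exact absurd hdown (lt_asymm h')
      · exact Or.inr (h'.trans hdown)
termination_by k - i

theorem NoValley.card_le_two {f : ℕ → α} {N : ℕ} (h : NoValley f N) {a : α} {S : Finset ℕ}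
    (hS : ∀ i ∈ S, i < N ∧ f i = a) : S.card ≤ 2 := by
  by_contra! hcard
  let e := S.orderEmbOfFin rfl
  have mem (r : Fin S.card) : e r < N ∧ f (e r) = a := hS _ (S.orderEmbOfFin_mem rfl r)
  have h01 : e ⟨0, by omega⟩ < e ⟨1, by omega⟩ := e.strictMono (by simp [Fin.lt_def])
  have h12 : e ⟨1, by omega⟩ < e ⟨2, by omega⟩ := e.strictMono (by simp [Fin.lt_def])
  rcases h.lt_or_lt h01 h12 (mem _).1 with hlt | hlt <;> simp [(mem _).2] at hlt

theorem NoValley.eq_add_one_of_eq_max {f : ℕ → α} {N : ℕ} (h : NoValley f N) {M : α}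
    (hM : ∀ l < N, f l ≤ M) {i j : ℕ} (hij : i < j) (hj : j < N) (hi : f i = M)
    (hj' : f j = M) :
    j = i + 1 := by
  by_contra hne
  rcases h.lt_or_lt (Nat.lt_succ_self i) (by omega) hj with hlt | hlt
  · exact not_lt_of_ge (hM (i + 1) (by omega)) (hi ▸ hlt)
  · exact not_lt_of_ge (hM (i + 1) (by omega)) (hj' ▸ hlt)

end Valley

section Walks
variable {V W : Type*} (c : V → V → ℝ≥0∞)

lemma walkCost_cons_cons (u v : V) (l : List V) :
    walkCost c (u :: v :: l) = c u v + walkCost c (v :: l) := rfl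

lemma walkCost_three (a b d : V) : walkCost c [a, b, d] = c a b + c b d := by
  simp [walkCost]

lemma walkCost_ne_top_of_getD (x : V) {p : List V}
    (h : ∀ i, i + 1 < p.length → c (p.getD i x) (p.getD (i + 1) x) ≠ ⊤) :
    walkCost c p ≠ ⊤ := by
  induction p with
  | nil => simp [walkCost]
  | cons u l ih =>
    cases l with
    | nil => simp [walkCost]
    | cons v l =>
      rw [walkCost_cons_cons]
      exact ENNReal.add_ne_top.2 ⟨by simpa using h 0 (by simp),
        ih fun i hi => by simpa using h (i + 1) (by simpa using hi)⟩

lemma walkCost_append (l m : List V) :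
    walkCost c (l ++ m) =
      walkCost c l + walkCost c (l.getLast?.toList ++ m.head?.toList) + walkCost c m := by
  induction l with
  | nil => cases m <;> simp [walkCost]
  | cons a l ih =>
    cases l with
    | nil => cases m <;> simp [walkCost]
    | cons b l =>
      simp only [List.cons_append, walkCost_cons_cons] at ih ⊢
      rw [ih, List.getLast?_cons_cons]
      ring

lemma walkCost_map (f : W → V) (l : List W) :
    walkCost c (l.map f) = walkCost (fun a b => c (f a) (f b)) l := by
  induction l with
  | nil => rfl
  | cons a l ih =>
    cases l with
    | nil => rfl
    | cons b l => simp only [List.map_cons, walkCost_cons_cons] at ih ⊢; rw [ih]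

def IsShortestWalk (p : List V) : Prop :=
  walkCost c p ≠ ⊤ ∧
    ∀ q : List V, q.head? = p.head? → q.getLast? = p.getLast? → walkCost c p ≤ walkCost c q

variable {c}

theorem isShortestWalk_of_walkCost_eq_spDist {p : List V} {x y : V} (hh : p.head? = some x)
    (hl : p.getLast? = some y) (hfin : walkCost c p ≠ ⊤) (h : walkCost c p = spDist c x y) :
    IsShortestWalk c p := by
  refine ⟨hfin, fun q hq hq' => ?_⟩
  rw [h]
  exact iInf_le (fun r : {l : List V // l.head? = some x ∧ l.getLast? = some y} => walkCost c r.1)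
    ⟨q, hq.trans hh, hq'.trans hl⟩

theorem IsShortestWalk.infix {l m r : List V} (h : IsShortestWalk c (l ++ m ++ r)) (hm : m ≠ []) :
    IsShortestWalk c m := by
  set X := walkCost c l + walkCost c (l.getLast?.toList ++ m.head?.toList)
  set Y := walkCost c (m.getLast?.toList ++ r.head?.toList) + walkCost c r
  have split : ∀ q : List V, q ≠ [] → q.head? = m.head? → q.getLast? = m.getLast? →
      walkCost c (l ++ q ++ r) = X + walkCost c q + Y := by
    intro q hq hh hl
    rw [walkCost_append c (l ++ q), walkCost_append c l, List.getLast?_append_of_ne_nil _ hq,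
      hh, hl]
    ring
  have hfin := h.1
  rw [split m hm rfl rfl] at hfin
  simp only [ne_eq, ENNReal.add_eq_top, not_or] at hfin
  refine ⟨hfin.1.2, fun q hh hl => ?_⟩
  have hq : q ≠ [] := by rintro rfl; exact hm (List.head?_eq_none_iff.1 hh.symm)
  have hle := h.2 (l ++ q ++ r) (by simp [List.head?_append, hh])
    (by simp [List.getLast?_append, hl])
  rwa [split m hm rfl rfl, split q hq hh hl, ENNReal.add_le_add_iff_right hfin.2,
    ENNReal.add_le_add_iff_left hfin.1.1] at hle

theorem IsShortestWalk.of_map {f : W → V} {p : List W} (h : IsShortestWalk c (p.map f)) :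
    IsShortestWalk (fun a b => c (f a) (f b)) p := by
  refine ⟨walkCost_map c f p ▸ h.1, fun q hh hl => ?_⟩
  have := h.2 (q.map f) (by simp [hh]) (by simp [hl])
  rwa [walkCost_map, walkCost_map] at this

theorem IsShortestWalk.take_drop {p : List V} (h : IsShortestWalk c p) {i k : ℕ} (hk : 0 < k)
    (hi : i < p.length) : IsShortestWalk c ((p.drop i).take k) := by
  refine IsShortestWalk.infix (l := p.take i) (r := (p.drop i).drop k) ?_ ?_
  · rwa [List.append_assoc, List.take_append_drop, List.take_append_drop]
  · rw [← List.length_pos_iff, List.length_take, List.length_drop]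
    omega

theorem IsShortestWalk.getD_three {p : List V} (h : IsShortestWalk c p) (x : V) {i : ℕ}
    (hi : i + 2 < p.length) :
    IsShortestWalk c [p.getD i x, p.getD (i + 1) x, p.getD (i + 2) x] := by
  convert h.take_drop (i := i) (k := 3) (by omega) (by omega) using 1
  simp (disch := omega) [List.take_add_one, List.getD_eq_getElem?_getD]

theorem IsShortestWalk.getD_four {p : List V} (h : IsShortestWalk c p) (x : V) {i : ℕ}
    (hi : i + 3 < p.length) :
    IsShortestWalk c [p.getD i x, p.getD (i + 1) x, p.getD (i + 2) x, p.getD (i + 3) x] := by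
  convert h.take_drop (i := i) (k := 4) (by omega) (by omega) using 1
  simp (disch := omega) [List.take_add_one, List.getD_eq_getElem?_getD]

end Walks

section Graph

abbrev Edg (n : ℕ) := {e : Vert n × Vert n // dEdge n e.1 e.2}

def Vert.lift {n : ℕ} (u : Vert n) : Vert (n + 1) := Sum.inl u

def Vert.mid {n : ℕ} (z : Edg n × Bool) : Vert (n + 1) := Sum.inr z

lemma Vert.succ_cases {n : ℕ} (v : Vert (n + 1)) :
    (∃ u : Vert n, v = u.lift) ∨ ∃ z : Edg n × Bool, v = Vert.mid z := by
  rcases v with u | z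
  exacts [Or.inl ⟨u, rfl⟩, Or.inr ⟨z, rfl⟩]

lemma edgeAt_succ_lift_lift {n k : ℕ} {u v : Vert n} :
    edgeAt (n + 1) k u.lift v.lift ↔ edgeAt n k u v := by
  constructor
  · rintro (⟨-, e, b, ⟨-, ⟨⟩⟩ | ⟨⟨⟩, -⟩⟩ | ⟨u', v', ⟨⟩, ⟨⟩, h⟩)
    exact h
  · exact fun h => Or.inr ⟨u, v, rfl, rfl, h⟩

lemma edgeAt_succ_lift_mid {n k : ℕ} {u : Vert n} {z : Edg n × Bool} :
    edgeAt (n + 1) k u.lift (Vert.mid z) ↔ k = n + 1 ∧ u = z.1.1.1 := by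
  constructor
  · rintro (⟨rfl, e, b, ⟨⟨⟩, ⟨⟩⟩ | ⟨⟨⟩, -⟩⟩ | ⟨u', v', -, ⟨⟩, -⟩)
    exact ⟨rfl, rfl⟩
  · rintro ⟨rfl, rfl⟩
    exact Or.inl ⟨rfl, z.1, z.2, Or.inl ⟨rfl, rfl⟩⟩

lemma edgeAt_succ_mid_lift {n k : ℕ} {v : Vert n} {z : Edg n × Bool} :
    edgeAt (n + 1) k (Vert.mid z) v.lift ↔ k = n + 1 ∧ v = z.1.1.2 := by
  constructor
  · rintro (⟨rfl, e, b, ⟨⟨⟩, -⟩ | ⟨⟨⟩, ⟨⟩⟩⟩ | ⟨u', v', ⟨⟩, -, -⟩)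
    exact ⟨rfl, rfl⟩
  · rintro ⟨rfl, rfl⟩
    exact Or.inl ⟨rfl, z.1, z.2, Or.inr ⟨rfl, rfl⟩⟩

lemma not_edgeAt_succ_mid_mid {n k : ℕ} {z w : Edg n × Bool} :
    ¬ edgeAt (n + 1) k (Vert.mid z) (Vert.mid w) := by
  rintro (⟨-, e, b, ⟨⟨⟩, -⟩ | ⟨-, ⟨⟩⟩⟩ | ⟨u', v', ⟨⟩, -, -⟩)

lemma edgeAt_le : ∀ {n k : ℕ} {u v : Vert n}, edgeAt n k u v → k ≤ n
  | 0, _, _, _, h => h.1.le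
  | _ + 1, _, _, _, Or.inl h => h.1.le
  | n + 1, _, _, _, Or.inr ⟨_, _, _, _, h⟩ => (edgeAt_le h).trans n.le_succ

lemma edgeAt_self_of_dEdge {n : ℕ} {u v : Vert n} (h : dEdge n u v) : edgeAt n n u v := by
  cases n
  · exact ⟨rfl, h⟩
  · exact Or.inl ⟨rfl, h⟩

lemma generation_unique : ∀ {n j k : ℕ} {u v : Vert n},
    (edgeAt n j u v ∨ edgeAt n j v u) → (edgeAt n k u v ∨ edgeAt n k v u) → j = k
  | 0, _, _, _, _, hj, hk => by
    rcases hj with hj | hj <;> rcases hk with hk | hk <;> rw [hj.1, hk.1]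
  | n + 1, j, k, u, v, hj, hk => by
    obtain ⟨u, rfl⟩ | ⟨z, rfl⟩ := u.succ_cases <;>
      obtain ⟨v, rfl⟩ | ⟨w, rfl⟩ := v.succ_cases
    · simp only [edgeAt_succ_lift_lift] at hj hk
      exact generation_unique hj hk
    · simp only [edgeAt_succ_lift_mid, edgeAt_succ_mid_lift] at hj hk
      rw [hj.elim And.left And.left, hk.elim And.left And.left]
    · simp only [edgeAt_succ_lift_mid, edgeAt_succ_mid_lift] at hj hk
      rw [hj.elim And.left And.left, hk.elim And.left And.left]
    · exact (hj.elim not_edgeAt_succ_mid_mid not_edgeAt_succ_mid_mid).elim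

lemma edgeAt_zero_unique : ∀ {n : ℕ} {u v u' v' : Vert n},
    edgeAt n 0 u v → edgeAt n 0 u' v' → u = u' ∧ v = v'
  | 0, _, _, _, _, ⟨_, hu, hv⟩, ⟨_, hu', hv'⟩ => ⟨hu.trans hu'.symm, hv.trans hv'.symm⟩
  | _ + 1, _, _, _, _, Or.inl ⟨h, _⟩, _ => absurd h.symm (Nat.succ_ne_zero _)
  | _ + 1, _, _, _, _, _, Or.inl ⟨h, _⟩ => absurd h.symm (Nat.succ_ne_zero _)
  | _ + 1, _, _, _, _, Or.inr ⟨_, _, rfl, rfl, h⟩, Or.inr ⟨_, _, rfl, rfl, h'⟩ => by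
    obtain ⟨rfl, rfl⟩ := edgeAt_zero_unique h h'
    exact ⟨rfl, rfl⟩

end Graph

section Weights
variable {ε : ℝ}

def edgeWeight (ε : ℝ) (k : ℕ) : ℝ≥0∞ := ENNReal.ofReal ((1 / 2 + ε) ^ k)

lemma edgeWeight_ne_top (k : ℕ) : edgeWeight ε k ≠ ⊤ := ENNReal.ofReal_ne_top

lemma edgeWeight_ne_zero (hε0 : 0 < ε) (k : ℕ) : edgeWeight ε k ≠ 0 :=
  (ENNReal.ofReal_pos.2 (pow_pos (by linarith) k)).ne'

lemma edgeWeight_strictAnti (hε0 : 0 < ε) (hε : ε < 1 / 2) : StrictAnti (edgeWeight ε) :=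
  fun _ _ h => (ENNReal.ofReal_lt_ofReal_iff (pow_pos (by linarith) _)).2
    (pow_lt_pow_right_of_lt_one₀ (by linarith) (by linarith) h)

lemma edgeWeight_lt_add_edgeWeight_succ (hε0 : 0 < ε) (n : ℕ) :
    edgeWeight ε n < edgeWeight ε (n + 1) + edgeWeight ε (n + 1) := by
  have hq : (0 : ℝ) < 1 / 2 + ε := by linarith
  rw [edgeWeight, edgeWeight, ← ENNReal.ofReal_add (by positivity) (by positivity),
    ENNReal.ofReal_lt_ofReal_iff (by positivity), pow_succ]
  nlinarith [pow_pos hq n]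

lemma wCost_comm (n : ℕ) (u v : Vert n) : wCost ε n u v = wCost ε n v u := by
  simp only [wCost, or_comm]

lemma wCost_eq_of_edgeAt {n k : ℕ} {u v : Vert n} (h : edgeAt n k u v ∨ edgeAt n k v u) :
    wCost ε n u v = edgeWeight ε k :=
  le_antisymm (iInf₂_le k h) (le_iInf₂ fun _ hj => (generation_unique hj h) ▸ le_rfl)

lemma exists_edgeAt_of_wCost_ne_top {n : ℕ} {u v : Vert n} (h : wCost ε n u v ≠ ⊤) :
    ∃ k, edgeAt n k u v ∨ edgeAt n k v u := by
  by_contra! hk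
  exact h (by simp [wCost, hk])

lemma wCost_eq_edgeWeight_iff (hε0 : 0 < ε) (hε : ε < 1 / 2) {n k : ℕ} {u v : Vert n} :
    wCost ε n u v = edgeWeight ε k ↔ edgeAt n k u v ∨ edgeAt n k v u := by
  refine ⟨fun h => ?_, wCost_eq_of_edgeAt⟩
  obtain ⟨j, hj⟩ := exists_edgeAt_of_wCost_ne_top (h ▸ edgeWeight_ne_top k)
  rwa [(edgeWeight_strictAnti hε0 hε).injective ((wCost_eq_of_edgeAt hj).symm.trans h)] at hj

lemma edgeWeight_le_wCost (hε0 : 0 < ε) (hε : ε < 1 / 2) {n : ℕ} {u v : Vert n}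
    (h : wCost ε n u v ≠ ⊤) : edgeWeight ε n ≤ wCost ε n u v := by
  obtain ⟨k, hk⟩ := exists_edgeAt_of_wCost_ne_top h
  rw [wCost_eq_of_edgeAt hk]
  exact (edgeWeight_strictAnti hε0 hε).antitone (hk.elim edgeAt_le edgeAt_le)

lemma wCost_le_edgeWeight_zero (hε0 : 0 < ε) (hε : ε < 1 / 2) {n : ℕ} {u v : Vert n}
    (h : wCost ε n u v ≠ ⊤) : wCost ε n u v ≤ edgeWeight ε 0 := by
  obtain ⟨k, hk⟩ := exists_edgeAt_of_wCost_ne_top h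
  rw [wCost_eq_of_edgeAt hk]
  exact (edgeWeight_strictAnti hε0 hε).antitone k.zero_le

lemma wCost_lift_lift (n : ℕ) (u v : Vert n) :
    wCost ε (n + 1) u.lift v.lift = wCost ε n u v := by
  simp only [wCost, edgeAt_succ_lift_lift]

lemma wCost_mid_of_ne_top {n : ℕ} {u : Vert (n + 1)} {z : Edg n × Bool}
    (h : wCost ε (n + 1) u (Vert.mid z) ≠ ⊤) :
    (u = z.1.1.1.lift ∨ u = z.1.1.2.lift) ∧
      wCost ε (n + 1) u (Vert.mid z) = edgeWeight ε (n + 1) := by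
  obtain ⟨k, hk⟩ := exists_edgeAt_of_wCost_ne_top h
  obtain ⟨u, rfl⟩ | ⟨w, rfl⟩ := u.succ_cases
  · have hk' := hk
    rw [edgeAt_succ_lift_mid, edgeAt_succ_mid_lift] at hk'
    rcases hk' with ⟨rfl, rfl⟩ | ⟨rfl, rfl⟩
    · exact ⟨Or.inl rfl, wCost_eq_of_edgeAt hk⟩
    · exact ⟨Or.inr rfl, wCost_eq_of_edgeAt hk⟩
  · exact (hk.elim not_edgeAt_succ_mid_mid not_edgeAt_succ_mid_mid).elim

end Weights

section ShortestWalks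
variable {ε : ℝ}

theorem not_isShortestWalk_generation_zero (hε0 : 0 < ε) (hε : ε < 1 / 2) {n : ℕ}
    {a b c : Vert n} (hab : wCost ε n a b = edgeWeight ε 0)
    (hbc : wCost ε n b c = edgeWeight ε 0) :
    ¬ IsShortestWalk (wCost ε n) [a, b, c] := by
  intro h
  have hac : a = c := by
    rw [wCost_eq_edgeWeight_iff hε0 hε] at hab hbc
    rcases hab with hab | hab <;> rcases hbc with hbc | hbc
    · exact (edgeAt_zero_unique hab hbc).1.trans (edgeAt_zero_unique hab hbc).2
    · exact (edgeAt_zero_unique hab hbc).1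
    · exact (edgeAt_zero_unique hab hbc).2
    · exact (edgeAt_zero_unique hab hbc).2.trans (edgeAt_zero_unique hab hbc).1
  subst hac
  have := h.2 [a] rfl rfl
  rw [walkCost_three, hab, hbc] at this
  simp [walkCost, edgeWeight_ne_zero hε0] at this

theorem not_isShortestWalk_mid_middle (hε0 : 0 < ε) {n : ℕ} {b c : Vert (n + 1)}
    {z : Edg n × Bool} : ¬ IsShortestWalk (wCost ε (n + 1)) [b, Vert.mid z, c] := by
  intro h
  have hfin := h.1
  rw [walkCost_three, wCost_comm _ _ c] at hfin
  obtain ⟨hb, hc⟩ := ENNReal.add_ne_top.1 hfin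
  obtain ⟨hbz, hbw⟩ := wCost_mid_of_ne_top hb
  obtain ⟨hcz, hcw⟩ := wCost_mid_of_ne_top hc
  have hcost : walkCost (wCost ε (n + 1)) [b, Vert.mid z, c] =
      edgeWeight ε (n + 1) + edgeWeight ε (n + 1) := by
    rw [walkCost_three, wCost_comm _ _ c, hbw, hcw]
  by_cases hbc : b = c
  · subst hbc
    have := h.2 [b] rfl rfl
    rw [hcost] at this
    simp [walkCost, edgeWeight_ne_zero hε0] at this
  · -- `b` and `c` are the two ends of the edge of `D n` that `z` subdivides
    have hshort : wCost ε (n + 1) b c = edgeWeight ε n := by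
      have hz := edgeAt_self_of_dEdge z.1.2
      rcases hbz with rfl | rfl <;> rcases hcz with rfl | rfl
      · exact absurd rfl hbc
      · exact wCost_eq_of_edgeAt (Or.inl (edgeAt_succ_lift_lift.2 hz))
      · exact wCost_eq_of_edgeAt (Or.inr (edgeAt_succ_lift_lift.2 hz))
      · exact absurd rfl hbc
    have := h.2 [b, c] rfl rfl
    rw [hcost] at this
    simp only [walkCost, hshort, add_zero] at this
    exact not_lt_of_ge this (edgeWeight_lt_add_edgeWeight_succ hε0 n)

lemma exists_lift_of_edgeWeight_le (hε0 : 0 < ε) (hε : ε < 1 / 2) {n : ℕ} {a : Vert (n + 1)}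
    {b : Vert n} (hfin : wCost ε (n + 1) a b.lift ≠ ⊤)
    (hle : edgeWeight ε n ≤ wCost ε (n + 1) a b.lift) : ∃ a' : Vert n, a = a'.lift := by
  obtain ⟨a', rfl⟩ | ⟨z, rfl⟩ := a.succ_cases
  · exact ⟨a', rfl⟩
  · rw [wCost_comm] at hfin hle
    rw [(wCost_mid_of_ne_top hfin).2] at hle
    exact absurd hle (not_le_of_gt (edgeWeight_strictAnti hε0 hε n.lt_succ_self))

theorem not_isShortestWalk_valley (hε0 : 0 < ε) (hε : ε < 1 / 2) :
    ∀ {n : ℕ} {a b c d : Vert n},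
    wCost ε n b c ≤ wCost ε n a b → wCost ε n b c ≤ wCost ε n c d →
    ¬ IsShortestWalk (wCost ε n) [a, b, c, d]
  | 0, a, b, c, d, _, _, h => by
    have h3 := IsShortestWalk.infix (l := []) (m := [a, b, c]) (r := [d]) h (List.cons_ne_nil _ _)
    have hfin := h3.1
    rw [walkCost_three] at hfin
    obtain ⟨hab, hbc⟩ := ENNReal.add_ne_top.1 hfin
    have gen_zero {u v : Vert 0} (huv : wCost ε 0 u v ≠ ⊤) :
        wCost ε 0 u v = edgeWeight ε 0 :=
      le_antisymm (wCost_le_edgeWeight_zero hε0 hε huv) (edgeWeight_le_wCost hε0 hε huv)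
    exact not_isShortestWalk_generation_zero hε0 hε (gen_zero hab) (gen_zero hbc) h3
  | n + 1, a, b, c, d, hab, hcd, h => by
    obtain ⟨b, rfl⟩ | ⟨z, rfl⟩ := b.succ_cases
    swap
    · exact not_isShortestWalk_mid_middle hε0
        (IsShortestWalk.infix (l := []) (m := [a, _, c]) (r := [d]) h (by simp))
    obtain ⟨c, rfl⟩ | ⟨z, rfl⟩ := c.succ_cases
    swap
    · exact not_isShortestWalk_mid_middle hε0
        (IsShortestWalk.infix (l := [a]) (m := [b.lift, _, d]) (r := []) h (by simp))
    have hfin := h.1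
    simp only [walkCost, add_zero, ne_eq, ENNReal.add_eq_top, not_or] at hfin
    have hbc : edgeWeight ε n ≤ wCost ε (n + 1) b.lift c.lift :=
      wCost_lift_lift n b c ▸ edgeWeight_le_wCost hε0 hε (wCost_lift_lift n b c ▸ hfin.2.1)
    obtain ⟨a, rfl⟩ := exists_lift_of_edgeWeight_le hε0 hε hfin.1 (hbc.trans hab)
    obtain ⟨d, rfl⟩ := exists_lift_of_edgeWeight_le hε0 hε
      (wCost_comm (ε := ε) _ _ _ ▸ hfin.2.2)
      (wCost_comm (ε := ε) _ _ _ ▸ hbc.trans hcd)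
    rw [wCost_lift_lift, wCost_lift_lift] at hab hcd
    have h' := IsShortestWalk.of_map (f := Vert.lift) (p := [a, b, c, d]) h
    simp only [wCost_lift_lift] at h'
    exact not_isShortestWalk_valley hε0 hε hab hcd h'

theorem IsShortestWalk.noValley (hε0 : 0 < ε) (hε : ε < 1 / 2) {n : ℕ} {p : List (Vert n)}
    (h : IsShortestWalk (wCost ε n) p) (x : Vert n) :
    NoValley (fun i => wCost ε n (p.getD i x) (p.getD (i + 1) x)) (p.length - 1) := by
  intro t ht
  by_contra! hv
  exact not_isShortestWalk_valley hε0 hε hv.1 hv.2 (h.getD_four x (by omega))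

end ShortestWalks

/-- A shortest path between two vertices of the weighted diamond `W n`
contains at most two edges of length `(1/2+ε)^k` for each `k ≥ 1`, at most one edge of
length `1`, and if it contains two edges of the maximal occurring length, then these two
edges are adjacent (consecutive in the path). -/
theorem statement9 (ε : ℝ) (hε0 : 0 < ε) (hε : ε < 1 / 2) (n : ℕ) (x y : Vert n)
    (p : List (Vert n)) (hhead : p.head? = some x) (hlast : p.getLast? = some y)
    (hwalk : ∀ i : ℕ, i + 1 < p.length →
      wCost ε n (p.getD i x) (p.getD (i + 1) x) ≠ ⊤)
    (hshort : walkCost (wCost ε n) p = spDist (wCost ε n) x y) :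
    (∀ k : ℕ, 1 ≤ k →
      ((Finset.range (p.length - 1)).filter (fun i =>
        wCost ε n (p.getD i x) (p.getD (i + 1) x) =
          ENNReal.ofReal ((1 / 2 + ε) ^ k))).card ≤ 2) ∧
    ((Finset.range (p.length - 1)).filter (fun i =>
        wCost ε n (p.getD i x) (p.getD (i + 1) x) =
          ENNReal.ofReal ((1 / 2 + ε) ^ (0 : ℕ)))).card ≤ 1 ∧
    (∀ t : ℕ, ∀ i j : ℕ, i < j → j + 1 < p.length →
      wCost ε n (p.getD i x) (p.getD (i + 1) x) = ENNReal.ofReal ((1 / 2 + ε) ^ t) →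
      wCost ε n (p.getD j x) (p.getD (j + 1) x) = ENNReal.ofReal ((1 / 2 + ε) ^ t) →
      (∀ l : ℕ, l + 1 < p.length →
        wCost ε n (p.getD l x) (p.getD (l + 1) x) ≤ ENNReal.ofReal ((1 / 2 + ε) ^ t)) →
      j = i + 1) := by
  have hp : IsShortestWalk (wCost ε n) p :=
    isShortestWalk_of_walkCost_eq_spDist hhead hlast (walkCost_ne_top_of_getD _ x hwalk) hshort
  have hv := hp.noValley hε0 hε x
  have hmax : ∀ l < p.length - 1,
      wCost ε n (p.getD l x) (p.getD (l + 1) x) ≤ edgeWeight ε 0 :=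
    fun l hl => wCost_le_edgeWeight_zero hε0 hε (hwalk l (by omega))
  have not_two_ones : ∀ i j, i < j → j < p.length - 1 →
      wCost ε n (p.getD i x) (p.getD (i + 1) x) = edgeWeight ε 0 →
      wCost ε n (p.getD j x) (p.getD (j + 1) x) = edgeWeight ε 0 → False := by
    intro i j hij hj hi hj'
    obtain rfl := hv.eq_add_one_of_eq_max hmax hij hj hi hj'
    exact not_isShortestWalk_generation_zero hε0 hε hi hj' (hp.getD_three x (by omega))
  refine ⟨fun k _ => hv.card_le_two (a := edgeWeight ε k)
      fun i hi => (Finset.mem_filter.1 hi).imp Finset.mem_range.1 id, ?_,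
    fun t i j hij hj hi hj' htop =>
      hv.eq_add_one_of_eq_max (fun l hl => htop l (by omega)) hij (by omega) hi hj'⟩
  refine Finset.card_le_one.2 fun i hi j hj => ?_
  rw [Finset.mem_filter, Finset.mem_range] at hi hj
  rcases lt_trichotomy i j with hij | rfl | hji
  · exact (not_two_ones i j hij hj.1 hi.2 hj.2).elim
  · rfl
  · exact (not_two_ones j i hji hi.1 hj.2 hi.2).elim

end Stmt
end
end

section
/- Let ε ∈ (0,1/2) and n ∈ ℕ. For every m with 1 ≤ m ≤ n, the weighted diamond W_n contains a set of 2^m vertices whose pairwise distances in d_{W_n} are all equal to 2(1/2+ε)^m; that is, W_n contains equilateral subsets of sizes 2^m for all m ≤ n. -/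
noncomputable section

open scoped ENNReal Classical

namespace Stmt

/-!
The `2^m` vertices are the neighbours of the base vertex `0` in `D_m`, seen inside `W_n`: any
two of them are joined through the base vertex by a path of length `2(1/2+ε)^m`. For the lower
bound, put `∓(1/2+ε)^m` on the two given vertices and `0` on the other vertices of `D_m`, and
extend to `D_n` by giving each new midpoint the average of the values at the ends of its edge.
Since `1/2 + ε ≥ 1/2`, averaging halves differences at least as fast as the weights shrink, so
the resulting function is `1`-Lipschitz for `d_{W_n}`.
-/

section ShortestPath

variable {V : Type*} {c : V → V → ℝ≥0∞} {φ : V → ℝ}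

lemma ofReal_abs_sub_le_walkCost (hφ : ∀ x y, ENNReal.ofReal |φ x - φ y| ≤ c x y) :
    ∀ {l : List V} {u v : V}, l.head? = some u → l.getLast? = some v →
      ENNReal.ofReal |φ u - φ v| ≤ walkCost c l
  | [], _, _, hu, _ => by simp at hu
  | [_], _, _, hu, hv => by
      obtain rfl := Option.some_injective _ hu
      obtain rfl := Option.some_injective _ hv
      simp
  | x :: y :: l, u, v, hu, hv => by
      obtain rfl := Option.some_injective _ hu
      have hv' : (y :: l).getLast? = some v := by simpa using hv
      calc ENNReal.ofReal |φ x - φ v|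
          ≤ ENNReal.ofReal (|φ x - φ y| + |φ y - φ v|) :=
            ENNReal.ofReal_le_ofReal (abs_sub_le _ _ _)
        _ ≤ ENNReal.ofReal |φ x - φ y| + ENNReal.ofReal |φ y - φ v| := ENNReal.ofReal_add_le
        _ ≤ c x y + walkCost c (y :: l) :=
            add_le_add (hφ x y) (ofReal_abs_sub_le_walkCost hφ rfl hv')

lemma ofReal_abs_sub_le_spDist (hφ : ∀ x y, ENNReal.ofReal |φ x - φ y| ≤ c x y) (u v : V) :
    ENNReal.ofReal |φ u - φ v| ≤ spDist c u v :=
  le_iInf fun p => ofReal_abs_sub_le_walkCost hφ p.2.1 p.2.2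

lemma spDist_le_add (c : V → V → ℝ≥0∞) (u w v : V) : spDist c u v ≤ c u w + c w v := by
  have : spDist c u v ≤ walkCost c [u, w, v] := iInf_le_of_le ⟨[u, w, v], rfl, rfl⟩ le_rfl
  simpa [walkCost] using this

end ShortestPath

abbrev Edge (n : ℕ) : Type := {e : Vert n × Vert n // dEdge n e.1 e.2}

lemma edgeAt_of_dEdge : ∀ {n : ℕ} {u v : Vert n}, dEdge n u v → edgeAt n n u v
  | 0, _, _, h => ⟨rfl, h⟩
  | _ + 1, _, _, h => Or.inl ⟨rfl, h⟩

def incl (m : ℕ) : (j : ℕ) → Vert m → Vert (m + j)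
  | 0 => id
  | j + 1 => fun x => Sum.inl (incl m j x)

lemma incl_injective (m : ℕ) : ∀ j, Function.Injective (incl m j)
  | 0 => Function.injective_id
  | j + 1 => fun _ _ h => incl_injective m j (Sum.inl_injective h)

lemma edgeAt_incl {m k : ℕ} {u v : Vert m} (h : edgeAt m k u v) :
    ∀ j, edgeAt (m + j) k (incl m j u) (incl m j v)
  | 0 => h
  | j + 1 => Or.inr ⟨_, _, rfl, rfl, edgeAt_incl h j⟩

def base : (n : ℕ) → Vert n
  | 0 => (0 : Fin 2)
  | n + 1 => Sum.inl (base n)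

/-- The `2^n` neighbours of `base n` in `D n`: a neighbour in `D (n + 1)` is one of the two
midpoints of an edge of `D n` from `base n`. -/
def baseNeighbor : (n : ℕ) → (Fin n → Bool) → {v : Vert n // dEdge n (base n) v}
  | 0, _ => ⟨(1 : Fin 2), rfl, rfl⟩
  | n + 1, σ =>
      ⟨Sum.inr (⟨(base n, (baseNeighbor n (Fin.tail σ)).1), (baseNeighbor n (Fin.tail σ)).2⟩, σ 0),
        _, σ 0, Or.inl ⟨rfl, rfl⟩⟩

lemma baseNeighbor_injective : ∀ n, Function.Injective (baseNeighbor n)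
  | 0 => fun _ _ _ => Subsingleton.elim _ _
  | n + 1 => fun σ τ h => by
      obtain ⟨hedge, hbit⟩ := Prod.mk.inj (Sum.inr_injective (congrArg Subtype.val h))
      have htail : Fin.tail σ = Fin.tail τ :=
        baseNeighbor_injective n (Subtype.ext (congrArg (fun e : Edge n => e.1.2) hedge))
      rw [← Fin.cons_self_tail σ, ← Fin.cons_self_tail τ, hbit, htail]

def WLipschitz (ε : ℝ) (n : ℕ) (φ : Vert n → ℝ) : Prop :=
  ∀ k u v, edgeAt n k u v → |φ u - φ v| ≤ (1 / 2 + ε) ^ k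

section Potential

variable {ε : ℝ}

lemma WLipschitz.ofReal_le_spDist {n : ℕ} {φ : Vert n → ℝ} (h : WLipschitz ε n φ)
    (u v : Vert n) : ENNReal.ofReal |φ u - φ v| ≤ spDist (wCost ε n) u v := by
  refine ofReal_abs_sub_le_spDist (fun x y => le_iInf₂ fun k hk => ?_) u v
  refine ENNReal.ofReal_le_ofReal ?_
  rcases hk with hk | hk
  · exact h k x y hk
  · exact abs_sub_comm (φ x) (φ y) ▸ h k y x hk

lemma wLipschitz_sumElim_zero (hε : 0 ≤ ε) {n : ℕ} {ψ : Edge n × Bool → ℝ}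
    (hψ : ∀ x, |ψ x| ≤ (1 / 2 + ε) ^ (n + 1)) :
    WLipschitz ε (n + 1) (Sum.elim 0 ψ) := by
  rintro k _ _ (⟨rfl, e, b, ⟨rfl, rfl⟩ | ⟨rfl, rfl⟩⟩ | ⟨u, v, rfl, rfl, -⟩)
  · show |0 - ψ (e, b)| ≤ _
    simpa using hψ (e, b)
  · show |ψ (e, b) - 0| ≤ _
    simpa using hψ (e, b)
  · show |(0 : ℝ) - 0| ≤ _
    simpa using pow_nonneg (by linarith : (0 : ℝ) ≤ 1 / 2 + ε) k

def averageExtend {n : ℕ} (φ : Vert n → ℝ) : Vert (n + 1) → ℝ :=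
  Sum.elim φ fun x => (φ x.1.1.1 + φ x.1.1.2) / 2

lemma WLipschitz.averageExtend (hε : 0 ≤ ε) {n : ℕ} {φ : Vert n → ℝ} (h : WLipschitz ε n φ) :
    WLipschitz ε (n + 1) (averageExtend φ) := by
  have half_le (e : Edge n) : |(φ e.1.1 - φ e.1.2) / 2| ≤ (1 / 2 + ε) ^ (n + 1) := by
    have he := h n _ _ (edgeAt_of_dEdge e.2)
    have hs : 0 ≤ (1 / 2 + ε) ^ n := by positivity
    rw [abs_div, abs_two, pow_succ]
    nlinarith
  rintro k _ _ (⟨rfl, e, b, ⟨rfl, rfl⟩ | ⟨rfl, rfl⟩⟩ | ⟨u, v, rfl, rfl, huv⟩)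
  · show |φ e.1.1 - (φ e.1.1 + φ e.1.2) / 2| ≤ _
    convert half_le e using 2
    ring
  · show |(φ e.1.1 + φ e.1.2) / 2 - φ e.1.2| ≤ _
    convert half_le e using 2
    ring
  · exact h k u v huv

def averageExtendIter {m : ℕ} (φ : Vert m → ℝ) : (j : ℕ) → Vert (m + j) → ℝ
  | 0 => φ
  | j + 1 => averageExtend (averageExtendIter φ j)

lemma averageExtendIter_incl {m : ℕ} (φ : Vert m → ℝ) (x : Vert m) :
    ∀ j, averageExtendIter φ j (incl m j x) = φ x
  | 0 => rfl
  | j + 1 => averageExtendIter_incl φ x j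

lemma WLipschitz.averageExtendIter (hε : 0 ≤ ε) {m : ℕ} {φ : Vert m → ℝ}
    (h : WLipschitz ε m φ) : ∀ j, WLipschitz ε (m + j) (averageExtendIter φ j)
  | 0 => h
  | j + 1 => (h.averageExtendIter hε j).averageExtend hε

end Potential

lemma spDist_le_two_mul_of_edgeAt {ε : ℝ} (hε : 0 ≤ ε) {n k : ℕ} {w u v : Vert n}
    (hu : edgeAt n k w u) (hv : edgeAt n k w v) :
    spDist (wCost ε n) u v ≤ ENNReal.ofReal (2 * (1 / 2 + ε) ^ k) := by
  have hs : 0 ≤ (1 / 2 + ε) ^ k := by positivity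
  calc spDist (wCost ε n) u v ≤ wCost ε n u w + wCost ε n w v := spDist_le_add _ u w v
    _ ≤ ENNReal.ofReal ((1 / 2 + ε) ^ k) + ENNReal.ofReal ((1 / 2 + ε) ^ k) :=
        add_le_add (iInf₂_le k (Or.inr hu)) (iInf₂_le k (Or.inl hv))
    _ = ENNReal.ofReal (2 * (1 / 2 + ε) ^ k) := by rw [← ENNReal.ofReal_add hs hs, two_mul]

lemma ofReal_two_mul_le_spDist_inr {ε : ℝ} (hε : 0 ≤ ε) {k : ℕ} {x y : Edge k × Bool}
    (hxy : x ≠ y) (j : ℕ) :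
    ENNReal.ofReal (2 * (1 / 2 + ε) ^ (k + 1)) ≤
      spDist (wCost ε (k + 1 + j)) (incl (k + 1) j (Sum.inr x)) (incl (k + 1) j (Sum.inr y)) := by
  set s := (1 / 2 + ε) ^ (k + 1)
  have hs : 0 ≤ s := by positivity
  let ψ : Edge k × Bool → ℝ := fun z => if z = x then -s else s
  have hψ : ∀ z, |ψ z| ≤ s := fun z => by
    by_cases hz : z = x <;> simp [ψ, hz, abs_of_nonneg hs]
  let φ : Vert (k + 1) → ℝ := Sum.elim 0 ψ
  have hLip : WLipschitz ε (k + 1 + j) (averageExtendIter φ j) :=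
    (wLipschitz_sumElim_zero hε hψ).averageExtendIter hε j
  have hφ := hLip.ofReal_le_spDist (incl (k + 1) j (Sum.inr x)) (incl (k + 1) j (Sum.inr y))
  have hx : averageExtendIter φ j (incl (k + 1) j (Sum.inr x)) = -s :=
    (averageExtendIter_incl _ _ j).trans (if_pos rfl)
  have hy : averageExtendIter φ j (incl (k + 1) j (Sum.inr y)) = s :=
    (averageExtendIter_incl _ _ j).trans (if_neg (Ne.symm hxy))
  rwa [hx, hy, abs_of_nonpos (by linarith), neg_sub, sub_neg_eq_add, ← two_mul] at hφ

theorem statement10_general (ε : ℝ) (hε0 : 0 < ε) (n m : ℕ) (hmn : m ≤ n) :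
    ∃ S : Set (Vert n), S.ncard = 2 ^ m ∧
      S.Pairwise (fun u v => dW ε n u v = 2 * (1 / 2 + ε) ^ m) := by
  obtain ⟨j, rfl⟩ := Nat.exists_eq_add_of_le hmn
  let f : (Fin m → Bool) → Vert (m + j) := fun σ => incl m j (baseNeighbor m σ)
  have hf : Function.Injective f :=
    (incl_injective m j).comp (Subtype.val_injective.comp (baseNeighbor_injective m))
  refine ⟨Set.range f, by simp [Set.ncard_range_of_injective hf], ?_⟩
  rintro _ ⟨σ, rfl⟩ _ ⟨τ, rfl⟩ hne
  suffices spDist (wCost ε (m + j)) (f σ) (f τ) = ENNReal.ofReal (2 * (1 / 2 + ε) ^ m) by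
    rw [dW, this, ENNReal.toReal_ofReal (by positivity)]
  have hστ : σ ≠ τ := ne_of_apply_ne f hne
  refine le_antisymm (spDist_le_two_mul_of_edgeAt hε0.le
    (edgeAt_incl (edgeAt_of_dEdge (baseNeighbor m σ).2) j)
    (edgeAt_incl (edgeAt_of_dEdge (baseNeighbor m τ).2) j)) ?_
  cases m with
  | zero => exact absurd (Subsingleton.elim σ τ) hστ
  | succ k =>
    exact ofReal_two_mul_le_spDist_inr hε0.le
      (fun h => hστ (baseNeighbor_injective _ (Subtype.ext (congrArg Sum.inr h)))) j

/-- For every `1 ≤ m ≤ n`, the weighted diamond `W n` contains an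
equilateral subset of size `2^m`, with all pairwise distances equal to `2*(1/2+ε)^m`. -/
theorem statement10 (ε : ℝ) (hε0 : 0 < ε) (hε : ε < 1 / 2) (n m : ℕ)
    (hm1 : 1 ≤ m) (hmn : m ≤ n) :
    ∃ S : Set (Vert n), S.ncard = 2 ^ m ∧
      S.Pairwise (fun u v => dW ε n u v = 2 * (1 / 2 + ε) ^ m) :=
  statement10_general ε hε0 n m hmn

end Stmt
end
end
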